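/- If y ∈ ℝ^d is such that Ay ∉ X = [-1,1]^D and z = p_A(p_X(Ay)) ≠ 0, then ‖Ψ(y)‖ ≥ ‖z'‖ where z' = z / max_i |z_i|, with equality if and only if p_X(Ay) = z'; hence warped images of points projected onto ∂X lie on or outside the boundary-ray pivot in Ran(A). -/

import Mathlib

/-- If Ay ∉ X and z = p_A(p_X(Ay)) ≠ 0, then ‖Ψ(y)‖ ≥ ‖z'‖, with equality iff
p_X(Ay) = z'. -/
theorem stmt_14 (D d : ℕ) [NeZero D]
    (A : EuclideanSpace ℝ (Fin d) →ₗ[ℝ] EuclideanSpace ℝ (Fin D))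
    (hA : Function.Injective A)
    (X : Set (EuclideanSpace ℝ (Fin D)))
    (hX : X = {x : EuclideanSpace ℝ (Fin D) | ∀ i, |x i| ≤ 1})
    (pX pA : EuclideanSpace ℝ (Fin D) → EuclideanSpace ℝ (Fin D))
    (hpX : ∀ x, pX x ∈ X ∧ ∀ z ∈ X, dist x (pX x) ≤ dist x z)
    (hpA : ∀ x, pA x = (Submodule.orthogonalProjectionOnto (LinearMap.range A) x : EuclideanSpace ℝ (Fin D)))
    (z' Ψ : EuclideanSpace ℝ (Fin d) → EuclideanSpace ℝ (Fin D))
    (hz' : ∀ y, z' y = (⨆ i, |pA (pX (A y)) i|)⁻¹ • pA (pX (A y)))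
    (hΨin : ∀ y, A y ∈ X → Ψ y = A y)
    (hΨout : ∀ y, A y ∉ X →
      Ψ y = z' y + ‖pX (A y) - z' y‖ • (‖z' y‖⁻¹ • z' y))
    (y : EuclideanSpace ℝ (Fin d)) (hy : A y ∉ X)
    (hz : pA (pX (A y)) ≠ 0) :
    ‖z' y‖ ≤ ‖Ψ y‖ ∧ (‖Ψ y‖ = ‖z' y‖ ↔ pX (A y) = z' y) := by
  have hΨ := hΨout y hy
  set t := ‖pX (A y) - z' y‖ with ht
  have hz'ne : z' y ≠ 0 := by
    rw [hz' y]
    refine smul_ne_zero (inv_ne_zero ?_) hz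
    have hDpos : (0:ℕ) < D := Nat.pos_of_ne_zero (NeZero.ne D)
    haveI : Nonempty (Fin D) := ⟨⟨0, hDpos⟩⟩
    obtain ⟨i, hi⟩ : ∃ i, pA (pX (A y)) i ≠ 0 := by
      by_contra h
      push_neg at h
      exact hz (PiLp.ext fun i => by simp [h i])
    have h1 : (0:ℝ) < |pA (pX (A y)) i| := abs_pos.mpr hi
    have h2 : |pA (pX (A y)) i| ≤ ⨆ i, |pA (pX (A y)) i| :=
      le_ciSup (Set.finite_range fun j => |pA (pX (A y)) j|).bddAbove i
    exact (lt_of_lt_of_le h1 h2).ne'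
  have hnz : (0:ℝ) < ‖z' y‖ := norm_pos_iff.mpr hz'ne
  have htnn : 0 ≤ t := norm_nonneg _
  have hΨeq : Ψ y = (1 + t * ‖z' y‖⁻¹) • z' y := by
    rw [hΨ, smul_smul, add_smul, one_smul]
  have hc : (0:ℝ) < 1 + t * ‖z' y‖⁻¹ := by positivity
  have hnormΨ : ‖Ψ y‖ = ‖z' y‖ + t := by
    rw [hΨeq, norm_smul, Real.norm_eq_abs, abs_of_pos hc]
    field_simp
  constructor
  · rw [hnormΨ]; linarith
  · rw [hnormΨ]
    constructor
    · intro h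
      have : t = 0 := by linarith
      have := norm_sub_eq_zero_iff.mp this
      exact this
    · intro h
      have : t = 0 := by rw [ht, h, sub_self, norm_zero]
      linarith
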